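/- arXiv:2412.04417 — 2 statements merged into one kernel-verified Lean document; each statement's English description precedes it below -/
import Mathlib

section
/- Let a_• be a graded family of monomial ideals in the polynomial ring R = k[x_1,...,x_n] over a field k. Then Δ(a_•) equals the closure of ∪_{n≥1} Δ(a_{n,•}). -/
open Filter Pointwise MvPolynomial

noncomputable section

/-- A graded family of ideals: `a p * a q ⊆ a (p+q)` for all `p, q ≥ 1`. -/
def IsGradedFamily {R : Type*} [CommSemiring R] (a : ℕ → Ideal R) : Prop :=
  ∀ p q : ℕ, 1 ≤ p → 1 ≤ q → a p * a q ≤ a (p + q)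

/-- The `n`-th truncation of a graded family: `a_{n,k} = a_k` for `k ≤ n`, and
`a_{n,k} = Σ_{i,j>0, i+j=k} a_{n,i}·a_{n,j}` for `k > n`. -/
def truncation {R : Type*} [CommSemiring R] (a : ℕ → Ideal R) (n : ℕ) (k : ℕ) : Ideal R :=
  Nat.strongRecOn k fun k ih =>
    if k ≤ n then a k
    else ⨆ i : Fin k, ⨆ h : 0 < i.val,
      ih i.val i.isLt *
      ih (k - i.val) (Nat.sub_lt (Nat.lt_of_le_of_lt (Nat.zero_le _) i.isLt) h)

lemma truncation_eq {R : Type*} [CommSemiring R] (a : ℕ → Ideal R) (n k : ℕ) :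
    truncation a n k = if k ≤ n then a k
    else ⨆ i : Fin k, ⨆ _ : 0 < i.val,
      truncation a n i.val * truncation a n (k - i.val) := by
  rw [truncation, Nat.strongRecOn, WellFounded.fix_eq]
  rfl

lemma truncation_of_le {R : Type*} [CommSemiring R] (a : ℕ → Ideal R) {n k : ℕ} (h : k ≤ n) :
    truncation a n k = a k := by
  rw [truncation_eq, if_pos h]

lemma truncation_le {R : Type*} [CommSemiring R] {a : ℕ → Ideal R} (ha : IsGradedFamily a)
    (m : ℕ) : ∀ k, 1 ≤ k → truncation a m k ≤ a k := by
  intro k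
  induction k using Nat.strongRecOn with
  | ind k ih =>
    intro hk
    rw [truncation_eq]
    split
    · exact le_rfl
    · rename_i hkm
      refine iSup_le fun i => iSup_le fun hi => ?_
      have h1 : (1:ℕ) ≤ i.val := hi
      have h2 : (1:ℕ) ≤ k - i.val := by omega
      have hlt2 : k - i.val < k := Nat.sub_lt (Nat.lt_of_le_of_lt (Nat.zero_le _) i.isLt) hi
      calc truncation a m i.val * truncation a m (k - i.val)
          ≤ a i.val * a (k - i.val) :=
            Ideal.mul_mono (ih i.val i.isLt h1) (ih (k - i.val) hlt2 h2)
        _ ≤ a (i.val + (k - i.val)) := ha _ _ h1 h2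
        _ = a k := by rw [Nat.add_sub_cancel' (Nat.le_of_lt i.isLt)]

variable {𝕜 : Type*} [Field 𝕜] {n : ℕ}

/-- A monomial ideal: an ideal generated by monomials. -/
def IsMonomialIdeal (I : Ideal (MvPolynomial (Fin n) 𝕜)) : Prop :=
  ∃ S : Set (Fin n →₀ ℕ), I = Ideal.span ((fun d => monomial d (1 : 𝕜)) '' S)

/-- The Newton polyhedron `NP(I) = conv{d ∈ ℤⁿ_{≥0} : x^d ∈ I}`. -/
def newtonPolyhedron (I : Ideal (MvPolynomial (Fin n) 𝕜)) : Set (Fin n → ℝ) :=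
  convexHull ℝ {x | ∃ d : Fin n →₀ ℕ, monomial d (1 : 𝕜) ∈ I ∧ x = fun i => (d i : ℝ)}

/-- The Newton–Okounkov body `Δ(a_•) = closure (⋃_{k ≥ 1} (1/k)·NP(a_k))`. -/
def noBody (a : ℕ → Ideal (MvPolynomial (Fin n) 𝕜)) : Set (Fin n → ℝ) :=
  closure (⋃ k : ℕ, ⋃ (_ : 1 ≤ k), (k : ℝ)⁻¹ • newtonPolyhedron (a k))

lemma newtonPolyhedron_mono {I J : Ideal (MvPolynomial (Fin n) 𝕜)} (h : I ≤ J) :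
    newtonPolyhedron I ⊆ newtonPolyhedron J :=
  convexHull_mono fun x ⟨d, hd, hx⟩ => ⟨d, h hd, hx⟩

/-- Theorem `thm.vhatTruncation`(2). For a graded family `a_•` of
monomial ideals in `k[x_1,…,x_n]`, the Newton–Okounkov body of `a_•` is the closure of the
union of the Newton–Okounkov bodies of its truncations:
`Δ(a_•) = closure (⋃_{n ≥ 1} Δ(a_{n,•}))`. -/
theorem noBody_eq_closure_iUnion_noBody_truncation
    (a : ℕ → Ideal (MvPolynomial (Fin n) 𝕜))
    (ha : IsGradedFamily a)
    (haMon : ∀ i : ℕ, 1 ≤ i → IsMonomialIdeal (a i)) :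
    noBody a = closure (⋃ m : ℕ, ⋃ (_ : 1 ≤ m), noBody (truncation a m)) := by
  apply subset_antisymm
  · -- Δ(a) ⊆ closure (⋃ Δ(truncations))
    rw [noBody]
    refine closure_minimal ?_ isClosed_closure
    refine Set.iUnion_subset fun k => Set.iUnion_subset fun hk => ?_
    have h1 : (k : ℝ)⁻¹ • newtonPolyhedron (a k) ⊆ noBody (truncation a k) := by
      refine Set.Subset.trans ?_ subset_closure
      refine Set.subset_iUnion_of_subset k <| Set.subset_iUnion_of_subset hk ?_
      rw [truncation_of_le a le_rfl]
    refine h1.trans <| Set.Subset.trans ?_ subset_closure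
    exact Set.subset_iUnion_of_subset k <| Set.subset_iUnion_of_subset hk le_rfl
  · -- closure (⋃ Δ(truncations)) ⊆ Δ(a)
    rw [noBody]
    refine closure_minimal ?_ isClosed_closure
    refine Set.iUnion_subset fun m => Set.iUnion_subset fun _ => ?_
    rw [noBody]
    refine closure_mono ?_
    refine Set.iUnion_subset fun k => Set.iUnion_subset fun hk => ?_
    refine Set.subset_iUnion_of_subset k <| Set.subset_iUnion_of_subset hk ?_
    exact Set.smul_set_mono (newtonPolyhedron_mono (truncation_le ha m k hk))
end
end

section
/- Let C ⊆ ℝ^n_{≥0} be a closed convex set that does not contain the origin and absorbs ℝ^n_{≥0}, i.e., C + ℝ^n_{≥0} ⊆ C, and let A ⊆ ℝ^n be any set. Then A ⊆ C if and only if ⟨a, b⟩ ≥ 1 for all a ∈ A and all b ∈ C^o. -/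
noncomputable section

/-- Usual dot product on `ℝⁿ`. -/
def dotProd {n : ℕ} (a b : Fin n → ℝ) : ℝ := ∑ i, a i * b i

/-- The polar set `D° = {a : ⟨a,b⟩ ≥ 1 for all b ∈ D}`. -/
def polarSet {n : ℕ} (D : Set (Fin n → ℝ)) : Set (Fin n → ℝ) :=
  {a | ∀ b ∈ D, 1 ≤ dotProd a b}

lemma dotProd_comm {n : ℕ} (a b : Fin n → ℝ) : dotProd a b = dotProd b a := by
  simp [dotProd, mul_comm]

lemma dotProd_add_left {n : ℕ} (a b c : Fin n → ℝ) :
    dotProd (a + b) c = dotProd a c + dotProd b c := by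
  simp [dotProd, add_mul, Finset.sum_add_distrib]

lemma dotProd_smul_left {n : ℕ} (s : ℝ) (a c : Fin n → ℝ) :
    dotProd (s • a) c = s * dotProd a c := by
  simp [dotProd, Finset.mul_sum, mul_assoc]

lemma dotProd_nonneg {n : ℕ} {a c : Fin n → ℝ} (ha : ∀ i, 0 ≤ a i) (hc : ∀ i, 0 ≤ c i) :
    0 ≤ dotProd a c :=
  Finset.sum_nonneg fun i _ => mul_nonneg (ha i) (hc i)

/-- A continuous linear functional is given by dot product with its coefficient vector. -/
lemma clm_eq_dotProd {n : ℕ} (f : (Fin n → ℝ) →L[ℝ] ℝ) (x : Fin n → ℝ) :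
    f x = dotProd (fun i => f (Pi.single i 1)) x := by
  have hx : x = ∑ i, (x i) • (Pi.single i 1 : Fin n → ℝ) := by
    ext j; simp [Pi.single_apply]
  conv_lhs => rw [hx]
  rw [map_sum]
  simp [dotProd, mul_comm]

/-- Let `C ⊆ ℝⁿ_{≥0}` be a closed convex set not containing the origin
which absorbs `ℝⁿ_{≥0}`, and let `A ⊆ ℝⁿ` be any set. Then `A ⊆ C` iff `⟨a,b⟩ ≥ 1` for all
`a ∈ A` and `b ∈ C°`. -/
theorem subset_iff_polar_pairing {n : ℕ} (C : Set (Fin n → ℝ))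
    (hCnonneg : C ⊆ {x | ∀ i, 0 ≤ x i})
    (hCclosed : IsClosed C) (hCconvex : Convex ℝ C)
    (hC0 : (0 : Fin n → ℝ) ∉ C)
    (hCabs : ∀ c ∈ C, ∀ y : Fin n → ℝ, (∀ i, 0 ≤ y i) → c + y ∈ C)
    (A : Set (Fin n → ℝ)) :
    A ⊆ C ↔ ∀ a ∈ A, ∀ b ∈ polarSet C, 1 ≤ dotProd a b := by
  constructor
  · intro hAC a ha b hb
    rw [dotProd_comm]
    exact hb a (hAC ha)
  · intro h a ha
    by_contra haC
    -- If C is empty, 0 is in the polar set, contradiction.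
    rcases C.eq_empty_or_nonempty with hCe | ⟨c0, hc0⟩
    · have h0 : (0 : Fin n → ℝ) ∈ polarSet C := by
        intro b hb; rw [hCe] at hb; exact absurd hb (Set.notMem_empty b)
      have := h a ha 0 h0
      simp [dotProd] at this
      linarith
    -- a nonneg coefficient vector for a separating functional
    have key : ∀ (f : (Fin n → ℝ) →L[ℝ] ℝ) (u : ℝ), (∀ c ∈ C, u < f c) →
        ∀ i, 0 ≤ f (Pi.single i 1) := by
      intro f u hf i
      by_contra hneg
      push_neg at hneg
      set v := f (Pi.single i 1) with hv
      set s : ℝ := (f c0 - u) / (-v) with hs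
      have hs0 : 0 ≤ s := div_nonneg (by have := hf c0 hc0; linarith) (by linarith)
      have hy : ∀ j, 0 ≤ (s • (Pi.single i 1 : Fin n → ℝ)) j := by
        intro j
        simp only [Pi.smul_apply, Pi.single_apply, smul_eq_mul]
        by_cases hij : j = i <;> simp [hij, hs0]
      have hmem := hCabs c0 hc0 _ hy
      have := hf _ hmem
      rw [map_add, map_smul] at this
      have hvne : v ≠ 0 := ne_of_lt hneg
      have hsv : s * v = -(f c0 - u) := by
        rw [hs, div_mul_eq_mul_div, div_neg, mul_div_assoc, div_self hvne, mul_one]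
      simp only [smul_eq_mul, hsv] at this
      linarith
    -- separate 0 from C
    obtain ⟨g, γ, hg0, hgC⟩ := geometric_hahn_banach_point_closed hCconvex hCclosed hC0
    rw [map_zero] at hg0
    set m : Fin n → ℝ := fun i => g (Pi.single i 1) with hm
    have hmnn : ∀ i, 0 ≤ m i := key g γ hgC
    have hmC : ∀ c ∈ C, γ < dotProd m c := by
      intro c hc; rw [← clm_eq_dotProd]; exact hgC c hc
    -- separate a from C
    obtain ⟨f, u, hfa, hfC⟩ := geometric_hahn_banach_point_closed hCconvex hCclosed haC
    set l : Fin n → ℝ := fun i => f (Pi.single i 1) with hl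
    have hlnn : ∀ i, 0 ≤ l i := key f u hfC
    have hlC : ∀ c ∈ C, u < dotProd l c := by
      intro c hc; rw [← clm_eq_dotProd]; exact hfC c hc
    have hla : dotProd l a < u := by rw [← clm_eq_dotProd]; exact hfa
    rcases lt_or_ge 0 u with hu | hu
    · -- u > 0 : take b = u⁻¹ • l
      have hb : u⁻¹ • l ∈ polarSet C := by
        intro c hc
        rw [dotProd_smul_left]
        have := hlC c hc
        rw [inv_mul_eq_div, le_div_iff₀ hu]
        linarith
      have h1 := h a ha _ hb
      rw [dotProd_comm, dotProd_smul_left] at h1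
      have : u⁻¹ * dotProd l a < u⁻¹ * u := by
        apply mul_lt_mul_of_pos_left hla (by positivity)
      rw [inv_mul_cancel₀ (ne_of_gt hu)] at this
      linarith
    · -- u ≤ 0 : dotProd l a < 0; combine m and l
      have hla0 : dotProd l a < 0 := lt_of_lt_of_le hla hu
      set t : ℝ := max 0 (dotProd m a / γ) / (-dotProd l a) with ht
      have ht0 : 0 ≤ t := div_nonneg (le_max_left _ _) (by linarith)
      have hb : γ⁻¹ • m + t • l ∈ polarSet C := by
        intro c hc
        rw [dotProd_add_left, dotProd_smul_left, dotProd_smul_left]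
        have h1 : 1 ≤ γ⁻¹ * dotProd m c := by
          have := hmC c hc
          rw [inv_mul_eq_div, le_div_iff₀ hg0]
          linarith
        have h2 : 0 ≤ t * dotProd l c :=
          mul_nonneg ht0 (dotProd_nonneg hlnn (hCnonneg hc))
        linarith
      have h1 := h a ha _ hb
      rw [dotProd_comm, dotProd_add_left, dotProd_smul_left, dotProd_smul_left,
        dotProd_comm m a, dotProd_comm l a] at h1
      rw [dotProd_comm a m, dotProd_comm a l] at h1
      have hlane : dotProd l a ≠ 0 := ne_of_lt hla0
      have htl : t * dotProd l a = -(max 0 (dotProd m a / γ)) := by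
        rw [ht, div_mul_eq_mul_div, div_neg, mul_div_assoc, div_self hlane, mul_one]
      have hma : γ⁻¹ * dotProd m a ≤ max 0 (dotProd m a / γ) := by
        rw [inv_mul_eq_div]; exact le_max_right _ _
      rw [htl] at h1
      linarith
  
end
end
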